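/- arXiv:2401.06434 — 2 statements merged into one kernel-verified Lean document; each statement's English description precedes it below -/
import Mathlib

section
/- Let N ≥ 1, s ∈ (0,1), R > 0, α₁, α₂ ∈ ℝ, γ = s − α₁ − α₂, and Φ an Orlicz function. Let A_k = {x ∈ ℝ^N : 2^k R ≤ |x| < 2^{k+1} R}. Then there exists C = C(s,α₁,α₂,N,R,Φ) > 0 such that for every u ∈ C_c¹(ℝ^N) and k ∈ ℤ: ∫_{A_k} Φ(|u(x)|/|x|^γ) dx ≤ C·2^{kN}·Φ(2^{−kγ}|(u)_{A_k}|) + C ∫_{A_k}∫_{A_k} Φ(|x|^{α₁}|y|^{α₂}|D_s u(x,y)|) dμ, where (u)_{A_k} is the average of u over A_k, D_s u(x,y) = (u(x)−u(y))/|x−y|^s, and dμ = dx dy/|x−y|^N. -/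
open Set Filter MeasureTheory

/-- An Orlicz function: continuous, convex on `[0,∞)`, `Φ(0)=0`,
`Φ(t)/t → 0` as `t → 0⁺`, `Φ(t)/t → ∞` as `t → ∞`, Δ₂-condition. -/
structure IsOrlicz (Φ : ℝ → ℝ) : Prop where
  continuousOn : ContinuousOn Φ (Ici 0)
  convexOn : ConvexOn ℝ (Ici 0) Φ
  map_zero : Φ 0 = 0
  tendsto_zero : Tendsto (fun t => Φ t / t) (nhdsWithin 0 (Ioi 0)) (nhds 0)
  tendsto_atTop : Tendsto (fun t => Φ t / t) atTop atTop
  delta2 : ∃ C > 0, ∀ t ≥ 0, Φ (2 * t) ≤ C * Φ t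

/-!
Split `u x = (u)_A + (u x - (u)_A)` and use the Δ₂-condition to bound `Φ` of the sum by the sum
of the `Φ`'s. On the annulus `a ≤ |x| < 2a`, every power of `|x|` or `|y|`, and every nonnegative
power of `|x - y|`, is at most a fixed multiple of the same power of `a`. Hence the mean term is a
bounded multiple of `2^{-kγ} |(u)_A|`, and by Jensen's inequality `Φ (|u x - (u)_A| / |x|^γ)` is
at most the mean over `y ∈ A` of `Φ (|u x - u y| / |x|^γ)`, where `|u x - u y| / |x|^γ` is a
bounded multiple of `|x|^{α₁} |y|^{α₂} |D_s u(x, y)|`. Finally `|x - y|^N ≤ (4a)^N`, which is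
comparable to `|A|`, so the kernel `|x - y|^{-N}` costs only a constant that does not depend on
the scale.
-/

open Metric Module
open scoped ENNReal

namespace IsOrlicz

variable {Φ : ℝ → ℝ}

theorem map_le_div_mul (hΦ : IsOrlicz Φ) {r t : ℝ} (hr : 0 ≤ r) (hrt : r ≤ t) (ht : 0 < t) :
    Φ r ≤ r / t * Φ t := by
  have h := hΦ.convexOn.2 (mem_Ici.2 le_rfl) (mem_Ici.2 ht.le)
    (sub_nonneg.2 ((div_le_one ht).2 hrt)) (div_nonneg hr ht.le) (sub_add_cancel 1 _)
  simpa [hΦ.map_zero, div_mul_cancel₀ r ht.ne'] using h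

theorem nonneg (hΦ : IsOrlicz Φ) {t : ℝ} (ht : 0 ≤ t) : 0 ≤ Φ t := by
  rcases ht.eq_or_lt with rfl | ht
  · exact hΦ.map_zero.ge
  -- the slope `Φ r / r` increases with `r` and tends to `0` at `0⁺`
  have hslope : ∀ᶠ r in nhdsWithin 0 (Ioi 0), Φ r / r ≤ Φ t / t := by
    filter_upwards [Ioo_mem_nhdsGT ht] with r hr
    rw [div_le_div_iff₀ hr.1 ht]
    calc Φ r * t ≤ r / t * Φ t * t := by gcongr; exact hΦ.map_le_div_mul hr.1.le hr.2.le ht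
      _ = Φ t * r := by field_simp
  have := le_of_tendsto hΦ.tendsto_zero hslope
  exact (div_nonneg_iff.1 this).elim (·.1) fun h => absurd h.2 (not_le.2 ht)

theorem monotoneOn (hΦ : IsOrlicz Φ) : MonotoneOn Φ (Ici 0) := by
  intro a ha b hb hab
  rcases (ha.out.trans hab).eq_or_lt with hb0 | hb0
  · rw [le_antisymm (hab.trans hb0.ge) ha.out, ← hb0]
  calc Φ a ≤ a / b * Φ b := hΦ.map_le_div_mul ha.out hab hb0
    _ ≤ 1 * Φ b := by gcongr; exacts [hΦ.nonneg hb, (div_le_one hb0).2 hab]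
    _ = Φ b := one_mul _

theorem mono (hΦ : IsOrlicz Φ) {a b : ℝ} (ha : 0 ≤ a) (hab : a ≤ b) : Φ a ≤ Φ b :=
  hΦ.monotoneOn ha (ha.trans hab) hab

theorem exists_map_le_mul_map (hΦ : IsOrlicz Φ) (Λ : ℝ) :
    ∃ K > 0, ∀ ⦃r t : ℝ⦄, 0 ≤ r → 0 ≤ t → r ≤ Λ * t → Φ r ≤ K * Φ t := by
  obtain ⟨C, -, hC⟩ := hΦ.delta2
  obtain ⟨m, hm⟩ := pow_unbounded_of_one_lt Λ one_lt_two
  have hpow : ∀ n : ℕ, ∀ t, 0 ≤ t → Φ (2 ^ n * t) ≤ max C 1 ^ n * Φ t := by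
    intro n
    induction n with
    | zero => simp
    | succ n ih =>
      intro t ht
      calc Φ (2 ^ (n + 1) * t) = Φ (2 * (2 ^ n * t)) := by ring_nf
        _ ≤ max C 1 * Φ (2 ^ n * t) :=
          (hC _ (by positivity)).trans
            (by gcongr; exacts [hΦ.nonneg (by positivity), le_max_left _ _])
        _ ≤ max C 1 * (max C 1 ^ n * Φ t) := by gcongr; exact ih t ht
        _ = max C 1 ^ (n + 1) * Φ t := by ring
  refine ⟨max C 1 ^ m, by positivity, fun r t hr ht hrt => ?_⟩
  exact (hΦ.mono hr (hrt.trans (by gcongr))).trans (hpow m t ht)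

theorem exists_map_add_le (hΦ : IsOrlicz Φ) :
    ∃ D > 0, ∀ ⦃a b : ℝ⦄, 0 ≤ a → 0 ≤ b → Φ (a + b) ≤ D * (Φ a + Φ b) := by
  obtain ⟨D, hD0, hD⟩ := hΦ.exists_map_le_mul_map 2
  refine ⟨D, hD0, fun a b ha hb => ?_⟩
  calc Φ (a + b) ≤ D * Φ (max a b) :=
        hD (by positivity) (ha.trans (le_max_left a b))
          (by linarith [le_max_left a b, le_max_right a b])
    _ ≤ D * (Φ a + Φ b) := by
        gcongr
        rcases max_choice a b with h | h <;> rw [h] <;> linarith [hΦ.nonneg ha, hΦ.nonneg hb]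

section Average

variable {α : Type*} [MeasurableSpace α] {μ : Measure α} {s : Set α}

theorem map_abs_sub_setAverage_div_le (hΦ : IsOrlicz Φ) (hs0 : μ s ≠ 0) (hs : μ s ≠ ∞)
    {f : α → ℝ} (hf : IntegrableOn f s μ) {c r : ℝ} (hr : 0 ≤ r)
    (hΦf : IntegrableOn (fun y => Φ (|c - f y| / r)) s μ) :
    Φ (|c - ⨍ y in s, f y ∂μ| / r) ≤ ⨍ y in s, Φ (|c - f y| / r) ∂μ := by
  have hμ : 0 < μ.real s := ENNReal.toReal_pos hs0 hs
  have hsub : c - ⨍ y in s, f y ∂μ = ⨍ y in s, (c - f y) ∂μ := by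
    rw [setAverage_eq, setAverage_eq, integral_sub (integrableOn_const (C := c) hs) hf,
      setIntegral_const, smul_sub, smul_smul, inv_mul_cancel₀ hμ.ne', one_smul]
  have habs : |c - ⨍ y in s, f y ∂μ| / r ≤ ⨍ y in s, |c - f y| / r ∂μ := by
    rw [hsub, setAverage_eq, setAverage_eq, smul_eq_mul, smul_eq_mul, abs_mul,
      abs_of_pos (inv_pos.2 hμ), integral_div, mul_div_assoc]
    gcongr
    exact abs_integral_le_integral_abs
  refine (hΦ.mono (by positivity) habs).trans ?_
  exact hΦ.convexOn.map_set_average_le hΦ.continuousOn isClosed_Ici hs0 hs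
    (ae_of_all _ fun y => mem_Ici.2 (by positivity))
    (((integrableOn_const (C := c) hs).sub hf).abs.div_const r) hΦf

theorem map_abs_div_le_add_setAverage (hΦ : IsOrlicz Φ) {D : ℝ} (hD0 : 0 < D)
    (hD : ∀ ⦃a b : ℝ⦄, 0 ≤ a → 0 ≤ b → Φ (a + b) ≤ D * (Φ a + Φ b))
    (hs0 : μ s ≠ 0) (hs : μ s ≠ ∞) {f : α → ℝ} (hf : IntegrableOn f s μ) {c r : ℝ} (hr : 0 ≤ r)
    (hΦf : IntegrableOn (fun y => Φ (|c - f y| / r)) s μ) :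
    Φ (|c| / r) ≤ D * (Φ (|⨍ y in s, f y ∂μ| / r) + ⨍ y in s, Φ (|c - f y| / r) ∂μ) := by
  set m := ⨍ y in s, f y ∂μ
  have htri : |c| / r ≤ |m| / r + |c - m| / r := by
    rw [← add_div]
    gcongr
    simpa using abs_add_le m (c - m)
  calc Φ (|c| / r) ≤ Φ (|m| / r + |c - m| / r) := hΦ.mono (by positivity) htri
    _ ≤ D * (Φ (|m| / r) + Φ (|c - m| / r)) := hD (by positivity) (by positivity)
    _ ≤ D * (Φ (|m| / r) + ⨍ y in s, Φ (|c - f y| / r) ∂μ) := by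
        gcongr
        exact hΦ.map_abs_sub_setAverage_div_le hs0 hs hf hr hΦf

end Average

section Continuous

variable {X : Type*} [TopologicalSpace X] [MeasurableSpace X] [OpensMeasurableSpace X]
  {μ : Measure X} {s : Set X} {u : X → ℝ} {M : ℝ}

theorem integrableOn_map_abs_sub_div (hΦ : IsOrlicz Φ) (hμs : μ s ≠ ∞) (hu : Continuous u)
    (hM : ∀ x, ‖u x‖ ≤ M) (c : ℝ) {r : ℝ} (hr : 0 ≤ r) :
    IntegrableOn (fun y => Φ (|c - u y| / r)) s μ := by
  have hcont : Continuous fun y => Φ (|c - u y| / r) :=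
    hΦ.continuousOn.comp_continuous ((continuous_const.sub hu).abs.div_const _)
      fun y => mem_Ici.2 (by positivity)
  refine Measure.integrableOn_of_bounded hμs hcont.aestronglyMeasurable
    (M := Φ ((|c| + M) / r)) (ae_of_all _ fun y => ?_)
  rw [Real.norm_eq_abs, abs_of_nonneg (hΦ.nonneg (by positivity))]
  have hM0 : 0 ≤ M := (norm_nonneg _).trans (hM y)
  exact hΦ.mono (by positivity) (by gcongr; exact (abs_sub _ _).trans (by gcongr; exact hM y))

theorem setLIntegral_map_abs_div_le (hΦ : IsOrlicz Φ) (hs : MeasurableSet s) (hμs : μ s ≠ ∞)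
    (hu : Continuous u) (hM : ∀ x, ‖u x‖ ≤ M) {ρ : X → ℝ} (hρ : ∀ x ∈ s, 0 ≤ ρ x) {D B : ℝ}
    (hD0 : 0 < D) (hD : ∀ ⦃a b : ℝ⦄, 0 ≤ a → 0 ≤ b → Φ (a + b) ≤ D * (Φ a + Φ b))
    (hB : ∀ x ∈ s, Φ (|⨍ y in s, u y ∂μ| / ρ x) ≤ B) :
    ∫⁻ x in s, ENNReal.ofReal (Φ (|u x| / ρ x)) ∂μ ≤
      ENNReal.ofReal (D * B * μ.real s) + ENNReal.ofReal (D / μ.real s) *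
        ∫⁻ x in s, ∫⁻ y in s, ENNReal.ofReal (Φ (|u x - u y| / ρ x)) ∂μ ∂μ := by
  rcases eq_or_ne (μ s) 0 with hs0 | hs0
  · simp [setLIntegral_measure_zero _ _ hs0]
  have hu_int : IntegrableOn u s μ :=
    Measure.integrableOn_of_bounded hμs hu.aestronglyMeasurable (ae_of_all _ hM)
  have hosc_int : ∀ x ∈ s, IntegrableOn (fun y => Φ (|u x - u y| / ρ x)) s μ :=
    fun x hx => hΦ.integrableOn_map_abs_sub_div hμs hu hM (u x) (hρ x hx)
  have hpointwise : ∀ x ∈ s, ENNReal.ofReal (Φ (|u x| / ρ x)) ≤ ENNReal.ofReal (D * B) +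
      ENNReal.ofReal (D / μ.real s) * ∫⁻ y in s, ENNReal.ofReal (Φ (|u x - u y| / ρ x)) ∂μ := by
    intro x hx
    have hΦ_nonneg : ∀ y, 0 ≤ Φ (|u x - u y| / ρ x) :=
      fun y => hΦ.nonneg (div_nonneg (abs_nonneg _) (hρ x hx))
    have h : Φ (|u x| / ρ x) ≤ D * B + D / μ.real s * ∫ y in s, Φ (|u x - u y| / ρ x) ∂μ :=
      calc Φ (|u x| / ρ x) ≤ D * (B + ⨍ y in s, Φ (|u x - u y| / ρ x) ∂μ) :=
            (hΦ.map_abs_div_le_add_setAverage hD0 hD hs0 hμs hu_int (hρ x hx)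
              (hosc_int x hx)).trans (by gcongr; exact hB x hx)
        _ = _ := by rw [setAverage_eq, smul_eq_mul]; ring
    rw [← ofReal_integral_eq_lintegral_ofReal (hosc_int x hx) (ae_of_all _ hΦ_nonneg),
      ← ENNReal.ofReal_mul' (integral_nonneg hΦ_nonneg)]
    exact (ENNReal.ofReal_le_ofReal h).trans ENNReal.ofReal_add_le
  calc ∫⁻ x in s, ENNReal.ofReal (Φ (|u x| / ρ x)) ∂μ
      ≤ ∫⁻ x in s, (ENNReal.ofReal (D * B) + ENNReal.ofReal (D / μ.real s) *
          ∫⁻ y in s, ENNReal.ofReal (Φ (|u x - u y| / ρ x)) ∂μ) ∂μ :=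
        setLIntegral_mono' hs hpointwise
    _ = _ := by
        rw [lintegral_add_left measurable_const, setLIntegral_const,
          lintegral_const_mul' _ _ ENNReal.ofReal_ne_top, ENNReal.ofReal_mul' measureReal_nonneg,
          ofReal_measureReal hμs]

end Continuous

end IsOrlicz

theorem rpow_le_max_one_two_rpow_mul {a z : ℝ} (ha : 0 < a) (h₁ : a ≤ z) (h₂ : z ≤ 2 * a)
    (e : ℝ) : z ^ e ≤ max 1 (2 ^ e) * a ^ e := by
  rcases le_or_gt 0 e with he | he
  · calc z ^ e ≤ (2 * a) ^ e := Real.rpow_le_rpow (by linarith) h₂ he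
      _ = 2 ^ e * a ^ e := Real.mul_rpow zero_le_two ha.le
      _ ≤ max 1 (2 ^ e) * a ^ e := by gcongr; exact le_max_right _ _
  · calc z ^ e ≤ a ^ e := Real.rpow_le_rpow_of_nonpos ha h₁ he.le
      _ ≤ max 1 (2 ^ e) * a ^ e := le_mul_of_one_le_left (by positivity) (le_max_left _ _)

section Annulus

variable {E : Type*} [NormedAddCommGroup E]

def dyadicAnnulus (a : ℝ) : Set E := {x | a ≤ ‖x‖ ∧ ‖x‖ < 2 * a}

theorem dyadicAnnulus_eq_ball_sdiff (a : ℝ) :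
    (dyadicAnnulus a : Set E) = ball 0 (2 * a) \ ball 0 a := by
  ext x
  simp [dyadicAnnulus, and_comm]

theorem pos_of_mem_dyadicAnnulus {a : ℝ} {x : E} (hx : x ∈ dyadicAnnulus a) : 0 < a := by
  linarith [hx.1, hx.2]

theorem norm_sub_lt_of_mem_dyadicAnnulus {a : ℝ} {x y : E} (hx : x ∈ dyadicAnnulus a)
    (hy : y ∈ dyadicAnnulus a) : ‖x - y‖ < 4 * a :=
  (norm_sub_le x y).trans_lt (by linarith [hx.2, hy.2])

theorem div_rpow_le_mul_of_mem_dyadicAnnulus {s α₁ α₂ a d : ℝ} {x y : E} (hs : 0 ≤ s)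
    (hx : x ∈ dyadicAnnulus a) (hy : y ∈ dyadicAnnulus a) (hxy : x ≠ y) (hd : 0 ≤ d) :
    d / ‖x‖ ^ (s - α₁ - α₂) ≤ 4 ^ s * (max 1 (2 ^ (α₂ - s)) * max 1 (2 ^ (-α₂))) *
      (‖x‖ ^ α₁ * ‖y‖ ^ α₂ * (d / ‖x - y‖ ^ s)) := by
  have ha := pos_of_mem_dyadicAnnulus hx
  have hp : 0 < ‖x‖ := ha.trans_le hx.1
  have hq : 0 < ‖y‖ := ha.trans_le hy.1
  have hr : 0 < ‖x - y‖ := norm_pos_iff.2 (sub_ne_zero.2 hxy)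
  have hratio : ‖x - y‖ ^ s * ‖x‖ ^ (α₂ - s) * ‖y‖ ^ (-α₂) ≤
      4 ^ s * (max 1 (2 ^ (α₂ - s)) * max 1 (2 ^ (-α₂))) :=
    calc ‖x - y‖ ^ s * ‖x‖ ^ (α₂ - s) * ‖y‖ ^ (-α₂)
        ≤ (4 * a) ^ s * (max 1 (2 ^ (α₂ - s)) * a ^ (α₂ - s)) *
            (max 1 (2 ^ (-α₂)) * a ^ (-α₂)) := by
          gcongr
          · exact (norm_sub_lt_of_mem_dyadicAnnulus hx hy).le
          · exact rpow_le_max_one_two_rpow_mul ha hx.1 hx.2.le _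
          · exact rpow_le_max_one_two_rpow_mul ha hy.1 hy.2.le _
      _ = 4 ^ s * (max 1 (2 ^ (α₂ - s)) * max 1 (2 ^ (-α₂))) *
            (a ^ s * a ^ (α₂ - s) * a ^ (-α₂)) := by
          rw [Real.mul_rpow (by norm_num) ha.le]; ring
      _ = 4 ^ s * (max 1 (2 ^ (α₂ - s)) * max 1 (2 ^ (-α₂))) := by
          rw [← Real.rpow_add ha, ← Real.rpow_add ha]; norm_num
  calc d / ‖x‖ ^ (s - α₁ - α₂)
      = ‖x - y‖ ^ s * ‖x‖ ^ (α₂ - s) * ‖y‖ ^ (-α₂) *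
          (‖x‖ ^ α₁ * ‖y‖ ^ α₂ * (d / ‖x - y‖ ^ s)) := by
        rw [Real.rpow_sub hp, Real.rpow_sub hp, Real.rpow_sub hp, Real.rpow_neg hq.le]
        field_simp
    _ ≤ _ := by gcongr

theorem div_rpow_le_of_mem_dyadicAnnulus_zpow {R γ t : ℝ} (hR : 0 < R) (ht : 0 ≤ t) {k : ℤ}
    {x : E} (hx : x ∈ dyadicAnnulus (2 ^ k * R)) :
    t / ‖x‖ ^ γ ≤ max 1 (2 ^ (-γ)) * R ^ (-γ) * (2 ^ (-(k:ℝ) * γ) * t) := by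
  have h2k : (0:ℝ) < 2 ^ k := zpow_pos two_pos k
  have hx0 : 0 < ‖x‖ := (mul_pos h2k hR).trans_le hx.1
  calc t / ‖x‖ ^ γ = ‖x‖ ^ (-γ) * t := by rw [Real.rpow_neg hx0.le, div_eq_inv_mul]
    _ ≤ max 1 (2 ^ (-γ)) * (2 ^ k * R) ^ (-γ) * t := by
        gcongr; exact rpow_le_max_one_two_rpow_mul (by positivity) hx.1 hx.2.le _
    _ = max 1 (2 ^ (-γ)) * R ^ (-γ) * (2 ^ (-(k:ℝ) * γ) * t) := by
        rw [Real.mul_rpow h2k.le hR.le, ← Real.rpow_intCast, ← Real.rpow_mul zero_le_two]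
        ring_nf

theorem IsOrlicz.exists_map_div_rpow_le {Φ : ℝ → ℝ} (hΦ : IsOrlicz Φ) {s : ℝ} (hs : 0 ≤ s)
    (α₁ α₂ : ℝ) {p : ℝ} (hp : 0 ≤ p) :
    ∃ K > 0, ∀ ⦃a : ℝ⦄ ⦃x y : E⦄ (f : E → ℝ), x ∈ dyadicAnnulus a → y ∈ dyadicAnnulus a →
      Φ (|f x - f y| / ‖x‖ ^ (s - α₁ - α₂)) ≤ K * (4 * a) ^ p *
        (Φ (‖x‖ ^ α₁ * ‖y‖ ^ α₂ * (|f x - f y| / ‖x - y‖ ^ s)) / ‖x - y‖ ^ p) := by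
  obtain ⟨K, hK0, hK⟩ :=
    hΦ.exists_map_le_mul_map (4 ^ s * (max 1 (2 ^ (α₂ - s)) * max 1 (2 ^ (-α₂))))
  refine ⟨K, hK0, fun a x y f hx hy => ?_⟩
  rcases eq_or_ne x y with rfl | hxy
  · simp [hΦ.map_zero]
  set w := ‖x‖ ^ α₁ * ‖y‖ ^ α₂ * (|f x - f y| / ‖x - y‖ ^ s)
  have hr : 0 < ‖x - y‖ := norm_pos_iff.2 (sub_ne_zero.2 hxy)
  have hΦw : 0 ≤ Φ w := hΦ.nonneg (by positivity)
  calc Φ (|f x - f y| / ‖x‖ ^ (s - α₁ - α₂)) ≤ K * Φ w :=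
        hK (by positivity) (by positivity)
          (div_rpow_le_mul_of_mem_dyadicAnnulus hs hx hy hxy (abs_nonneg _))
    _ = K * ‖x - y‖ ^ p * (Φ w / ‖x - y‖ ^ p) := by field_simp
    _ ≤ K * (4 * a) ^ p * (Φ w / ‖x - y‖ ^ p) := by
        gcongr; exact (norm_sub_lt_of_mem_dyadicAnnulus hx hy).le

theorem measurableSet_dyadicAnnulus [MeasurableSpace E] [OpensMeasurableSpace E] (a : ℝ) :
    MeasurableSet (dyadicAnnulus a : Set E) := by
  rw [dyadicAnnulus_eq_ball_sdiff]
  exact measurableSet_ball.diff measurableSet_ball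

variable [NormedSpace ℝ E] [FiniteDimensional ℝ E] [MeasurableSpace E] (μ : Measure E)

theorem measure_dyadicAnnulus_ne_top [IsFiniteMeasureOnCompacts μ] (a : ℝ) :
    μ (dyadicAnnulus a) ≠ ∞ := by
  rw [dyadicAnnulus_eq_ball_sdiff]
  exact measure_ne_top_of_subset sdiff_subset measure_ball_lt_top.ne

variable [BorelSpace E] [μ.IsAddHaarMeasure] [Nontrivial E]

theorem addHaar_real_dyadicAnnulus {a : ℝ} (ha : 0 ≤ a) :
    μ.real (dyadicAnnulus a) = (2 ^ finrank ℝ E - 1) * a ^ finrank ℝ E * μ.real (ball 0 1) := by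
  have ha' : 0 ≤ a ^ finrank ℝ E := by positivity
  rw [dyadicAnnulus_eq_ball_sdiff, measureReal_sdiff (ball_subset_ball (by linarith))
    measurableSet_ball measure_ball_lt_top.ne, measureReal_def, measureReal_def,
    Measure.addHaar_ball μ _ (by positivity), Measure.addHaar_ball μ _ ha, ENNReal.toReal_mul,
    ENNReal.toReal_mul, ENNReal.toReal_ofReal (by positivity), ENNReal.toReal_ofReal ha',
    measureReal_def]
  ring

theorem addHaar_real_dyadicAnnulus_zpow_mul {R : ℝ} (hR : 0 < R) (k : ℤ) :
    μ.real (dyadicAnnulus (2 ^ k * R)) =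
      (2 ^ finrank ℝ E - 1) * R ^ finrank ℝ E * μ.real (ball 0 1) *
        2 ^ ((k:ℝ) * finrank ℝ E) := by
  rw [addHaar_real_dyadicAnnulus μ (by positivity), Real.rpow_mul zero_le_two,
    Real.rpow_intCast, Real.rpow_natCast, mul_pow]
  ring

theorem IsOrlicz.exists_setLIntegral_oscillation_le {Φ : ℝ → ℝ} (hΦ : IsOrlicz Φ) {s : ℝ}
    (hs : 0 ≤ s) (α₁ α₂ : ℝ) :
    ∃ K > 0, ∀ ⦃a : ℝ⦄, 0 < a → ∀ f : E → ℝ,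
      ENNReal.ofReal (μ.real (dyadicAnnulus a))⁻¹ * ∫⁻ x in dyadicAnnulus a,
          ∫⁻ y in dyadicAnnulus a, ENNReal.ofReal (Φ (|f x - f y| / ‖x‖ ^ (s - α₁ - α₂))) ∂μ ∂μ ≤
        ENNReal.ofReal (K * 4 ^ finrank ℝ E / ((2 ^ finrank ℝ E - 1) * μ.real (ball 0 1))) *
          ∫⁻ x in dyadicAnnulus a, ∫⁻ y in dyadicAnnulus a,
            ENNReal.ofReal (Φ (‖x‖ ^ α₁ * ‖y‖ ^ α₂ * (|f x - f y| / ‖x - y‖ ^ s)) /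
              ‖x - y‖ ^ (finrank ℝ E : ℝ)) ∂μ ∂μ := by
  obtain ⟨K, hK0, hK⟩ :=
    hΦ.exists_map_div_rpow_le (E := E) hs α₁ α₂ (Nat.cast_nonneg (finrank ℝ E))
  refine ⟨K, hK0, fun a ha f => ?_⟩
  have hA := measurableSet_dyadicAnnulus (E := E) a
  have hscale : (μ.real (dyadicAnnulus a))⁻¹ * (K * (4 * a) ^ (finrank ℝ E : ℝ)) =
      K * 4 ^ finrank ℝ E / ((2 ^ finrank ℝ E - 1) * μ.real (ball 0 1)) := by
    have h2 : (1:ℝ) < 2 ^ finrank ℝ E := one_lt_pow₀ one_lt_two finrank_pos.ne'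
    have hc : 0 < μ.real (ball (0 : E) 1) :=
      ENNReal.toReal_pos (measure_ball_pos μ 0 one_pos).ne' measure_ball_lt_top.ne
    rw [addHaar_real_dyadicAnnulus μ ha.le, Real.rpow_natCast, mul_pow]
    field_simp
  calc _ ≤ ENNReal.ofReal (μ.real (dyadicAnnulus a))⁻¹ * ∫⁻ x in dyadicAnnulus a,
          ∫⁻ y in dyadicAnnulus a, ENNReal.ofReal (K * (4 * a) ^ (finrank ℝ E : ℝ)) *
            ENNReal.ofReal (Φ (‖x‖ ^ α₁ * ‖y‖ ^ α₂ * (|f x - f y| / ‖x - y‖ ^ s)) /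
              ‖x - y‖ ^ (finrank ℝ E : ℝ)) ∂μ ∂μ := by
        gcongr ENNReal.ofReal _ * ?_
        refine setLIntegral_mono' hA fun x hx => setLIntegral_mono' hA fun y hy => ?_
        rw [← ENNReal.ofReal_mul (by positivity)]
        exact ENNReal.ofReal_le_ofReal (hK f hx hy)
    _ = _ := by
        simp_rw [lintegral_const_mul' _ _ ENNReal.ofReal_ne_top]
        rw [← mul_assoc, ← ENNReal.ofReal_mul (by positivity), hscale]

theorem IsOrlicz.exists_setLIntegral_dyadicAnnulus_le {Φ : ℝ → ℝ} (hΦ : IsOrlicz Φ) {s : ℝ}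
    (hs : 0 ≤ s) (α₁ α₂ : ℝ) {R : ℝ} (hR : 0 < R) :
    ∃ C > 0, ∀ u : E → ℝ, Continuous u → HasCompactSupport u → ∀ k : ℤ,
      ∫⁻ x in dyadicAnnulus (2 ^ k * R), ENNReal.ofReal (Φ (|u x| / ‖x‖ ^ (s - α₁ - α₂))) ∂μ ≤
        ENNReal.ofReal (C * 2 ^ ((k:ℝ) * finrank ℝ E) *
          Φ (2 ^ (-(k:ℝ) * (s - α₁ - α₂)) * |⨍ x in dyadicAnnulus (2 ^ k * R), u x ∂μ|)) +
        ENNReal.ofReal C * ∫⁻ x in dyadicAnnulus (2 ^ k * R), ∫⁻ y in dyadicAnnulus (2 ^ k * R),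
          ENNReal.ofReal (Φ (‖x‖ ^ α₁ * ‖y‖ ^ α₂ * (|u x - u y| / ‖x - y‖ ^ s)) /
            ‖x - y‖ ^ (finrank ℝ E : ℝ)) ∂μ ∂μ := by
  set d := finrank ℝ E
  set c := μ.real (ball (0 : E) 1)
  have hc : 0 < c := ENNReal.toReal_pos (measure_ball_pos μ 0 one_pos).ne' measure_ball_lt_top.ne
  have h2d : (0:ℝ) < 2 ^ d - 1 := sub_pos.2 (one_lt_pow₀ one_lt_two finrank_pos.ne')
  obtain ⟨D, hD0, hD⟩ := hΦ.exists_map_add_le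
  obtain ⟨K₁, hK₁0, hK₁⟩ :=
    hΦ.exists_map_le_mul_map (max 1 (2 ^ (-(s - α₁ - α₂))) * R ^ (-(s - α₁ - α₂)))
  obtain ⟨K₂, -, hK₂⟩ := hΦ.exists_setLIntegral_oscillation_le μ hs α₁ α₂
  refine ⟨max (D * K₁ * ((2 ^ d - 1) * R ^ d * c)) (D * (K₂ * 4 ^ d / ((2 ^ d - 1) * c))),
    lt_max_of_lt_left (by positivity), fun u hu hsupp k => ?_⟩
  obtain ⟨M, hM⟩ := hu.bounded_above_of_compact_support hsupp
  set A : Set E := dyadicAnnulus (2 ^ k * R)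
  set t := 2 ^ (-(k:ℝ) * (s - α₁ - α₂)) * |⨍ x in A, u x ∂μ|
  have hΦt : 0 ≤ Φ t := hΦ.nonneg (by positivity)
  refine (hΦ.setLIntegral_map_abs_div_le (measurableSet_dyadicAnnulus _)
    (measure_dyadicAnnulus_ne_top μ _) hu hM (fun x _ => by positivity) hD0 hD (B := K₁ * Φ t)
    fun x hx => hK₁ (by positivity) (by positivity)
      (div_rpow_le_of_mem_dyadicAnnulus_zpow hR (abs_nonneg _) hx)).trans (add_le_add ?_ ?_)
  · refine ENNReal.ofReal_le_ofReal ?_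
    calc D * (K₁ * Φ t) * μ.real A =
          D * K₁ * ((2 ^ d - 1) * R ^ d * c) * 2 ^ ((k:ℝ) * d) * Φ t := by
          rw [addHaar_real_dyadicAnnulus_zpow_mul μ hR]; ring
      _ ≤ _ := by gcongr; exact le_max_left _ _
  · rw [div_eq_mul_inv, ENNReal.ofReal_mul hD0.le, mul_assoc]
    calc _ ≤ ENNReal.ofReal D * (ENNReal.ofReal (K₂ * 4 ^ d / ((2 ^ d - 1) * c)) * _) :=
          mul_le_mul_right (hK₂ (by positivity) u) _
      _ ≤ _ := by
          rw [← mul_assoc, ← ENNReal.ofReal_mul hD0.le]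
          gcongr
          exact le_max_right _ _

end Annulus

/-- Annular estimate (i): the Orlicz integral of `|u|/|x|^γ` over the dyadic
annulus `A_k = {2^k R ≤ |x| < 2^{k+1} R}` is controlled by the average of `u`
over `A_k` and the weighted fractional seminorm over `A_k`. -/
theorem annulus_estimate_one
    (N : ℕ) (hN : 1 ≤ N) (s α₁ α₂ R : ℝ) (hs : s ∈ Ioo (0:ℝ) 1) (hR : 0 < R)
    (Φ : ℝ → ℝ) (hΦ : IsOrlicz Φ) (γ : ℝ) (hγ : γ = s - α₁ - α₂)
    (A : ℤ → Set (EuclideanSpace ℝ (Fin N)))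
    (hA : ∀ k, A k = {x | (2:ℝ) ^ k * R ≤ ‖x‖ ∧ ‖x‖ < (2:ℝ) ^ (k + 1) * R}) :
    ∃ C > 0, ∀ u : EuclideanSpace ℝ (Fin N) → ℝ,
      ContDiff ℝ 1 u → HasCompactSupport u → ∀ k : ℤ,
      (∫⁻ x in A k, ENNReal.ofReal (Φ (|u x| / ‖x‖ ^ γ))) ≤
        ENNReal.ofReal
          (C * (2:ℝ) ^ ((k:ℝ) * N) *
            Φ ((2:ℝ) ^ (-(k:ℝ) * γ) * |⨍ x in A k, u x|)) +
        ENNReal.ofReal C *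
          ∫⁻ x in A k, ∫⁻ y in A k, ENNReal.ofReal
            (Φ (‖x‖ ^ α₁ * ‖y‖ ^ α₂ * (|u x - u y| / ‖x - y‖ ^ s)) /
              ‖x - y‖ ^ (N:ℝ)) := by
  subst hγ
  have : Nonempty (Fin N) := ⟨⟨0, hN⟩⟩
  obtain ⟨C, hC, hestimate⟩ :=
    hΦ.exists_setLIntegral_dyadicAnnulus_le (volume : Measure (EuclideanSpace ℝ (Fin N)))
      hs.1.le α₁ α₂ hR
  refine ⟨C, hC, fun u hu hsupp k => ?_⟩
  have hAk : A k = dyadicAnnulus (2 ^ k * R) := by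
    rw [hA k, zpow_add_one₀ two_ne_zero, mul_comm _ (2:ℝ), mul_assoc]
    rfl
  simpa only [hAk, finrank_euclideanSpace_fin] using hestimate u hu.continuous hsupp k
end

section
/- For S(t) = t^p + t^q with q > p > 1, one has p⁻_S = inf_{t>0} tS'(t)/S(t) = p and p⁺_S = sup_{t>0} tS'(t)/S(t) = q. Moreover, if Ψ is any Orlicz function equivalent to S (i.e. C₁S(t) ≤ Ψ(t) ≤ C₂S(t) for all t ≥ 0 and some C₁, C₂ > 0), then p⁻_Ψ ≤ p and p⁺_Ψ ≥ q; hence p^⊖_S = p and p^⊕_S = q, the supremum/infimum of p⁻_Ψ and p⁺_Ψ over all equivalent Ψ being attained at S itself. -/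
open Set Filter MeasureTheory

/-- An Orlicz function `Φ` together with its right derivative `φ`:
`Φ` is continuous, convex on `[0,∞)`, vanishes at `0`, satisfies
`Φ(t)/t → 0` as `t → 0⁺`, `Φ(t)/t → ∞` as `t → ∞`, the Δ₂-condition,
and has the representation `Φ(t) = ∫₀ᵗ φ(s) ds` with `φ` non-decreasing,
right-continuous, `φ(0) = 0`, `φ(t) > 0` for `t > 0`, `φ(t) → ∞`. -/
structure IsOrliczPair (Φ φ : ℝ → ℝ) : Prop where
  continuousOn : ContinuousOn Φ (Ici 0)
  convexOn : ConvexOn ℝ (Ici 0) Φ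
  map_zero : Φ 0 = 0
  tendsto_zero : Tendsto (fun t => Φ t / t) (nhdsWithin 0 (Ioi 0)) (nhds 0)
  tendsto_atTop : Tendsto (fun t => Φ t / t) atTop atTop
  delta2 : ∃ C > 0, ∀ t ≥ 0, Φ (2 * t) ≤ C * Φ t
  rep : ∀ t ≥ 0, Φ t = ∫ s in (0:ℝ)..t, φ s
  deriv_mono : MonotoneOn φ (Ici 0)
  deriv_rightCont : ∀ t ≥ 0, ContinuousWithinAt φ (Ici t) t
  deriv_zero : φ 0 = 0
  deriv_pos : ∀ t > 0, 0 < φ t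
  deriv_atTop : Tendsto φ atTop atTop

/-- The set of values `t·φ(t)/Φ(t)` for `t > 0`, whose infimum and supremum
are `p⁻_Φ` and `p⁺_Φ`. -/
def orliczRatioSet (Φ φ : ℝ → ℝ) : Set ℝ := {r : ℝ | ∃ t > 0, r = t * φ t / Φ t}

/-! For `S(t) = t^p + t^q` one computes `t S'(t) / S(t) = q - (q - p) / (1 + t^(q-p))`, which
increases from `p` (as `t → 0⁺`) to `q` (as `t → ∞`).

If `Ψ ≍ S`, the inequality `p⁻_Ψ Ψ(t) ≤ t ψ(t)` makes `Ψ(t) / t^(p⁻_Ψ)` nondecreasing, so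
`C₁ t^p ≤ Ψ(t) ≤ Ψ(1) t^(p⁻_Ψ)` on `(0, 1]`, and letting `t → 0⁺` forces `p⁻_Ψ ≤ p`. Dually,
`Ψ(t) / t^(p⁺_Ψ)` is nonincreasing, so `C₁ t^q ≤ Ψ(1) t^(p⁺_Ψ)` for `t ≥ 1`, forcing `q ≤ p⁺_Ψ`. -/

open Topology

theorem monotoneOn_div_rpow_of_mul_le_mul_deriv {f f' : ℝ → ℝ} {m : ℝ}
    (hf : ContinuousOn f (Ioi 0)) (hf' : ∀ x > 0, HasDerivWithinAt f (f' x) (Ici x) x)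
    (h : ∀ x > 0, m * f x ≤ x * f' x) : MonotoneOn (fun x => f x / x ^ m) (Ioi 0) := by
  intro a ha b hb hab
  have hg : ∀ x > 0, HasDerivWithinAt (fun x => f x / x ^ m)
      (x ^ (m - 1) * (x * f' x - m * f x) / (x ^ m) ^ 2) (Ici x) x := by
    intro x hx
    refine ((hf' x hx).div (Real.hasDerivAt_rpow_const (Or.inl hx.ne')).hasDerivWithinAt
      (Real.rpow_pos_of_pos hx m).ne').congr_deriv ?_
    rw [show x ^ m = x ^ (m - 1) * x by rw [← Real.rpow_add_one hx.ne']; ring_nf]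
    ring
  have hg_cont : ContinuousOn (fun x => f x / x ^ m) (Icc a b) :=
    (hf.mono fun x hx => ha.trans_le hx.1).div
      (continuousOn_id.rpow_const fun x hx => Or.inl (ha.trans_le hx.1).ne')
      fun x hx => (Real.rpow_pos_of_pos (ha.trans_le hx.1) m).ne'
  refine image_le_of_deriv_right_le_deriv_boundary (f := fun _ => f a / a ^ m) (a := a) (b := b)
    (B := fun x => f x / x ^ m)
    continuousOn_const (fun x _ => hasDerivWithinAt_const x _ _) le_rfl hg_cont
    (fun x hx => hg x (ha.trans_le hx.1)) (fun x hx => ?_) ⟨hab, le_rfl⟩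
  have hx : 0 < x := ha.trans_le hx.1
  exact div_nonneg (mul_nonneg (Real.rpow_pos_of_pos hx _).le (sub_nonneg.2 (h x hx)))
    (sq_nonneg _)

theorem antitoneOn_div_rpow_of_mul_deriv_le_mul {f f' : ℝ → ℝ} {m : ℝ}
    (hf : ContinuousOn f (Ioi 0)) (hf' : ∀ x > 0, HasDerivWithinAt f (f' x) (Ici x) x)
    (h : ∀ x > 0, x * f' x ≤ m * f x) : AntitoneOn (fun x => f x / x ^ m) (Ioi 0) := by
  intro a ha b hb hab
  have := monotoneOn_div_rpow_of_mul_le_mul_deriv hf.neg (fun x hx => (hf' x hx).neg)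
    (fun x hx => by simpa only [Pi.neg_apply, mul_neg, neg_le_neg_iff] using h x hx) ha hb hab
  simpa only [Pi.neg_apply, neg_div, neg_le_neg_iff] using this

theorem tendsto_rpow_nhdsGT_zero {y : ℝ} (hy : 0 < y) :
    Tendsto (fun t : ℝ => t ^ y) (𝓝[>] 0) (𝓝 0) := by
  simpa [Real.zero_rpow hy.ne'] using
    ((Real.continuous_rpow_const hy.le).tendsto 0).mono_left (nhdsWithin_le_nhds (s := Ioi 0))

theorem le_of_forall_mul_rpow_le_mul_rpow_of_le_one {C D p m : ℝ} (hC : 0 < C)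
    (h : ∀ t, 0 < t → t ≤ 1 → C * t ^ p ≤ D * t ^ m) : m ≤ p := by
  by_contra! hpm
  have hlim : Tendsto (fun t : ℝ => D * t ^ (m - p)) (𝓝[>] 0) (𝓝 0) := by
    simpa using (tendsto_rpow_nhdsGT_zero (sub_pos.2 hpm)).const_mul D
  have hC_le : ∀ᶠ t in 𝓝[>] 0, C ≤ D * t ^ (m - p) := by
    filter_upwards [Ioc_mem_nhdsGT one_pos] with t ⟨ht, ht1⟩
    have htp := Real.rpow_pos_of_pos ht p
    rw [Real.rpow_sub ht, mul_div_assoc', le_div_iff₀ htp]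
    exact h t ht ht1
  linarith [ge_of_tendsto hlim hC_le]

theorem le_of_forall_mul_rpow_le_mul_rpow_of_one_le {C D q m : ℝ} (hC : 0 < C)
    (h : ∀ t, 1 ≤ t → C * t ^ q ≤ D * t ^ m) : q ≤ m := by
  suffices -m ≤ -q by linarith
  refine le_of_forall_mul_rpow_le_mul_rpow_of_le_one (D := D) hC fun t ht ht1 => ?_
  simpa only [Real.inv_rpow ht.le, Real.rpow_neg ht.le] using h t⁻¹ (one_le_inv₀ ht |>.2 ht1)

theorem isGLB_image_of_tendsto {α γ : Type*} [Preorder γ] [TopologicalSpace γ]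
    [OrderClosedTopology γ] {f : α → γ} {s : Set α} {l : Filter α} [l.NeBot] {a : γ}
    (hs : s ∈ l) (ha : a ∈ lowerBounds (f '' s)) (hf : Tendsto f l (𝓝 a)) :
    IsGLB (f '' s) a :=
  ⟨ha, fun _ hb => ge_of_tendsto hf (mem_of_superset hs fun _ hx => hb (mem_image_of_mem f hx))⟩

theorem isLUB_image_of_tendsto {α γ : Type*} [Preorder γ] [TopologicalSpace γ]
    [OrderClosedTopology γ] {f : α → γ} {s : Set α} {l : Filter α} [l.NeBot] {a : γ}
    (hs : s ∈ l) (ha : a ∈ upperBounds (f '' s)) (hf : Tendsto f l (𝓝 a)) :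
    IsLUB (f '' s) a :=
  ⟨ha, fun _ hb => le_of_tendsto hf (mem_of_superset hs fun _ hx => hb (mem_image_of_mem f hx))⟩

namespace IsOrliczPair

variable {Φ φ : ℝ → ℝ}

theorem hasDerivWithinAt_Ici (h : IsOrliczPair Φ φ) {u : ℝ} (hu : 0 ≤ u) :
    HasDerivWithinAt Φ (φ u) (Ici u) u := by
  have hint : IntervalIntegrable φ volume 0 u :=
    (h.deriv_mono.mono fun s hs => by rw [uIcc_of_le hu] at hs; exact hs.1).intervalIntegrable
  have hmeas : StronglyMeasurableAtFilter φ (𝓝[>] u) :=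
    ⟨Icc u (u + 1), Icc_mem_nhdsGT (by linarith),
      ((h.deriv_mono.mono fun s hs => hu.trans hs.1).integrableOn_isCompact
        isCompact_Icc).aestronglyMeasurable⟩
  exact (intervalIntegral.integral_hasDerivWithinAt_right hint hmeas
    ((h.deriv_rightCont u hu).mono Ioi_subset_Ici_self)).congr
    (fun x hx => h.rep x (hu.trans hx)) (h.rep u hu)

theorem pos (h : IsOrliczPair Φ φ) {t : ℝ} (ht : 0 < t) : 0 < Φ t := by
  rw [h.rep t ht.le]
  exact intervalIntegral.intervalIntegral_pos_of_pos_on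
    (h.deriv_mono.mono fun s hs => by rw [uIcc_of_le ht.le] at hs; exact hs.1).intervalIntegrable
    (fun s hs => h.deriv_pos s hs.1) ht

theorem le_mul_rpow_of_mem_lowerBounds (h : IsOrliczPair Φ φ) {m : ℝ}
    (hm : m ∈ lowerBounds (orliczRatioSet Φ φ)) {t : ℝ} (ht : 0 < t) (ht1 : t ≤ 1) :
    Φ t ≤ Φ 1 * t ^ m := by
  have : Φ t / t ^ m ≤ Φ 1 / 1 ^ m :=
    monotoneOn_div_rpow_of_mul_le_mul_deriv (h.continuousOn.mono Ioi_subset_Ici_self)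
    (fun x hx => h.hasDerivWithinAt_Ici hx.le)
    (fun x hx => (le_div_iff₀ (h.pos hx)).1 (hm ⟨x, hx, rfl⟩)) ht (mem_Ioi.2 one_pos) ht1
  rwa [Real.one_rpow, div_one, div_le_iff₀ (Real.rpow_pos_of_pos ht m)] at this

theorem le_mul_rpow_of_mem_upperBounds (h : IsOrliczPair Φ φ) {M : ℝ}
    (hM : M ∈ upperBounds (orliczRatioSet Φ φ)) {t : ℝ} (ht1 : 1 ≤ t) :
    Φ t ≤ Φ 1 * t ^ M := by
  have ht : 0 < t := one_pos.trans_le ht1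
  have : Φ t / t ^ M ≤ Φ 1 / 1 ^ M :=
    antitoneOn_div_rpow_of_mul_deriv_le_mul (h.continuousOn.mono Ioi_subset_Ici_self)
    (fun x hx => h.hasDerivWithinAt_Ici hx.le)
    (fun x hx => (div_le_iff₀ (h.pos hx)).1 (hM ⟨x, hx, rfl⟩)) (mem_Ioi.2 one_pos) ht ht1
  rwa [Real.one_rpow, div_one, div_le_iff₀ (Real.rpow_pos_of_pos ht M)] at this

end IsOrliczPair

section RpowAddRpow

variable {p q : ℝ}

theorem mul_deriv_div_rpow_add_rpow {t : ℝ} (ht : 0 < t) :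
    t * (p * t ^ (p - 1) + q * t ^ (q - 1)) / (t ^ p + t ^ q) =
      q - (q - p) / (1 + t ^ (q - p)) := by
  have hp : t * t ^ (p - 1) = t ^ p := by
    rw [mul_comm, ← Real.rpow_add_one ht.ne', sub_add_cancel]
  have hq : t * t ^ (q - 1) = t ^ q := by
    rw [mul_comm, ← Real.rpow_add_one ht.ne', sub_add_cancel]
  have hqp : t ^ q = t ^ p * t ^ (q - p) := by rw [← Real.rpow_add ht]; ring_nf
  have htp := Real.rpow_pos_of_pos ht p
  have htqp := Real.rpow_pos_of_pos ht (q - p)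
  rw [mul_add, mul_left_comm, hp, mul_left_comm, hq, hqp]
  field_simp
  ring

theorem orliczRatioSet_rpow_add_rpow :
    orliczRatioSet (fun t => t ^ p + t ^ q) (fun t => p * t ^ (p - 1) + q * t ^ (q - 1)) =
      (fun t => q - (q - p) / (1 + t ^ (q - p))) '' Ioi 0 := by
  ext r
  constructor <;> rintro ⟨t, ht, rfl⟩ <;> exact ⟨t, ht, (mul_deriv_div_rpow_add_rpow ht).symm⟩

theorem isGLB_orliczRatioSet_rpow_add_rpow (hpq : p < q) :
    IsGLB (orliczRatioSet (fun t => t ^ p + t ^ q)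
      (fun t => p * t ^ (p - 1) + q * t ^ (q - 1))) p := by
  rw [orliczRatioSet_rpow_add_rpow]
  refine isGLB_image_of_tendsto (l := 𝓝[>] 0) self_mem_nhdsWithin ?_ ?_
  · rintro _ ⟨t, ht, rfl⟩
    have := div_le_self (sub_pos.2 hpq).le
      (le_add_of_nonneg_right (Real.rpow_nonneg ht.le (q - p)))
    dsimp only
    linarith
  · have : Tendsto (fun t : ℝ => q - (q - p) / (1 + t ^ (q - p))) (𝓝[>] 0)
        (𝓝 (q - (q - p) / (1 + 0))) := tendsto_const_nhds.sub (tendsto_const_nhds.div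
          ((tendsto_rpow_nhdsGT_zero (sub_pos.2 hpq)).const_add 1) (by norm_num))
    rwa [add_zero, div_one, sub_sub_cancel] at this

theorem isLUB_orliczRatioSet_rpow_add_rpow (hpq : p < q) :
    IsLUB (orliczRatioSet (fun t => t ^ p + t ^ q)
      (fun t => p * t ^ (p - 1) + q * t ^ (q - 1))) q := by
  rw [orliczRatioSet_rpow_add_rpow]
  refine isLUB_image_of_tendsto (Ioi_mem_atTop 0) ?_ ?_
  · rintro _ ⟨t, ht, rfl⟩
    have := div_nonneg (sub_pos.2 hpq).le
      (add_nonneg zero_le_one (Real.rpow_nonneg ht.le (q - p)))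
    dsimp only
    linarith
  · simpa using tendsto_const_nhds.sub (tendsto_const_nhds.div_atTop
      (tendsto_atTop_add_const_left _ 1 (tendsto_rpow_atTop (sub_pos.2 hpq))))

end RpowAddRpow

theorem sum_power_exponents_general (p q : ℝ) (hpq : p < q)
    (S S' : ℝ → ℝ) (hS : ∀ t, S t = t ^ p + t ^ q)
    (hS' : ∀ t, S' t = p * t ^ (p - 1) + q * t ^ (q - 1)) :
    IsGLB (orliczRatioSet S S') p ∧ IsLUB (orliczRatioSet S S') q ∧
    ∀ Ψ ψ : ℝ → ℝ, IsOrliczPair Ψ ψ →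
      (∃ C₁ > 0, ∃ C₂ > 0, ∀ t ≥ 0, C₁ * S t ≤ Ψ t ∧ Ψ t ≤ C₂ * S t) →
      ∀ pmΨ ppΨ : ℝ, IsGLB (orliczRatioSet Ψ ψ) pmΨ →
        IsLUB (orliczRatioSet Ψ ψ) ppΨ →
        pmΨ ≤ p ∧ q ≤ ppΨ := by
  obtain rfl : S = fun t => t ^ p + t ^ q := funext hS
  obtain rfl : S' = fun t => p * t ^ (p - 1) + q * t ^ (q - 1) := funext hS'
  refine ⟨isGLB_orliczRatioSet_rpow_add_rpow hpq, isLUB_orliczRatioSet_rpow_add_rpow hpq, ?_⟩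
  rintro Ψ ψ hΨ ⟨C₁, hC₁, _, -, hbd⟩ pmΨ ppΨ hpm hpp
  have hC₁S : ∀ t > 0, C₁ * t ^ p ≤ Ψ t ∧ C₁ * t ^ q ≤ Ψ t := fun t ht => by
    have hC₁S := (hbd t ht.le).1
    rw [mul_add] at hC₁S
    exact ⟨by linarith [mul_pos hC₁ (Real.rpow_pos_of_pos ht q)],
      by linarith [mul_pos hC₁ (Real.rpow_pos_of_pos ht p)]⟩
  exact ⟨le_of_forall_mul_rpow_le_mul_rpow_of_le_one hC₁ fun t ht ht1 =>
      (hC₁S t ht).1.trans (hΨ.le_mul_rpow_of_mem_lowerBounds hpm.1 ht ht1),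
    le_of_forall_mul_rpow_le_mul_rpow_of_one_le hC₁ fun t ht1 =>
      (hC₁S t (one_pos.trans_le ht1)).2.trans (hΨ.le_mul_rpow_of_mem_upperBounds hpp.1 ht1)⟩

/-- For `S(t) = t^p + t^q` with `1 < p < q`: `p⁻_S = p`, `p⁺_S = q`, and every
Orlicz function equivalent to `S` has `p⁻ ≤ p` and `p⁺ ≥ q`; hence
`p^⊖_S = p` and `p^⊕_S = q` are attained at `S` itself. -/
theorem sum_power_exponents (p q : ℝ) (hp : 1 < p) (hpq : p < q)
    (S S' : ℝ → ℝ) (hS : ∀ t, S t = t ^ p + t ^ q)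
    (hS' : ∀ t, S' t = p * t ^ (p - 1) + q * t ^ (q - 1)) :
    IsGLB (orliczRatioSet S S') p ∧ IsLUB (orliczRatioSet S S') q ∧
    ∀ Ψ ψ : ℝ → ℝ, IsOrliczPair Ψ ψ →
      (∃ C₁ > 0, ∃ C₂ > 0, ∀ t ≥ 0, C₁ * S t ≤ Ψ t ∧ Ψ t ≤ C₂ * S t) →
      ∀ pmΨ ppΨ : ℝ, IsGLB (orliczRatioSet Ψ ψ) pmΨ →
        IsLUB (orliczRatioSet Ψ ψ) ppΨ →
        pmΨ ≤ p ∧ q ≤ ppΨ :=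
  sum_power_exponents_general p q hpq S S' hS hS'
end
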